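/- arXiv:2407.01305 — 4 statements merged into one kernel-verified Lean document; each statement's English description precedes it below -/
import Mathlib

section
/- Define MSE_GMM(η²) = σ_glob² − (2/π) (∑_{k=1}^K p_k σ_k² / sqrt(σ_k² + η²))² and MSE_Gauss(η²) = σ_glob² − (2/π) σ_glob⁴ / (σ_glob² + η²), where σ_glob² = ∑_k p_k σ_k². Then for every η² > 0, MSE_Gauss(η²) ≤ MSE_GMM(η²). -/
/-!
The map `x ↦ x / √(x + t)` is concave on `[0, ∞)`, so by Jensen's inequality the mixture term
`∑ pₖ σₖ² / √(σₖ² + t)` is at most its value `S / √(S + t)` at the global variance `S = ∑ pₖ σₖ²`.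
Squaring gives the claim. Concavity is used only through the tangent line at `S`, which becomes a
polynomial inequality after substituting `a = √(x + t)`, `b = √(s + t)`.
-/

open Real Finset

theorem sum_mul_le_of_le_tangent {ι : Type*} (s : Finset ι) (p x : ι → ℝ) (f : ℝ → ℝ) (c : ℝ)
    (hp : ∀ i ∈ s, 0 ≤ p i) (hsum : ∑ i ∈ s, p i = 1)
    (htan : ∀ i ∈ s, f (x i) ≤ f (∑ j ∈ s, p j * x j) + c * (x i - ∑ j ∈ s, p j * x j)) :
    ∑ i ∈ s, p i * f (x i) ≤ f (∑ i ∈ s, p i * x i) := by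
  set m := ∑ j ∈ s, p j * x j
  calc ∑ i ∈ s, p i * f (x i) ≤ ∑ i ∈ s, p i * (f m + c * (x i - m)) :=
        sum_le_sum fun i hi => mul_le_mul_of_nonneg_left (htan i hi) (hp i hi)
    _ = f m := by
        simp only [mul_add, sum_add_distrib, ← sum_mul, hsum, mul_sub, mul_left_comm _ c, ← mul_sum,
          sum_sub_distrib]
        simp [m]

theorem div_sqrt_add_le_tangent {x s t : ℝ} (hx : 0 < x + t) (hs : 0 < s + t) (ht : 0 ≤ t) :
    x / √(x + t) ≤ s / √(s + t) + (s + 2 * t) / (2 * (s + t) * √(s + t)) * (x - s) := by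
  obtain ⟨a, ha, rfl⟩ : ∃ a, 0 < a ∧ x = a ^ 2 - t := ⟨√(x + t), by positivity, by simp [hx.le]⟩
  obtain ⟨b, hb, rfl⟩ : ∃ b, 0 < b ∧ s = b ^ 2 - t := ⟨√(s + t), by positivity, by simp [hs.le]⟩
  simp only [sub_add_cancel, sqrt_sq ha.le, sqrt_sq hb.le]
  have hgap : (b ^ 2 - t) / b + (b ^ 2 - t + 2 * t) / (2 * b ^ 2 * b) * (a ^ 2 - t - (b ^ 2 - t))
      - (a ^ 2 - t) / a
      = (a * b ^ 2 * (a - b) ^ 2 + t * (a - b) ^ 2 * (a + 2 * b)) / (2 * a * b ^ 3) := by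
    field_simp
    ring
  exact sub_nonneg.mp (hgap ▸ by positivity)

theorem sum_mul_div_sqrt_add_le {ι : Type*} (s : Finset ι) (p x : ι → ℝ) {t : ℝ}
    (hp : ∀ i ∈ s, 0 ≤ p i) (hsum : ∑ i ∈ s, p i = 1) (hx : ∀ i ∈ s, 0 ≤ x i) (ht : 0 < t) :
    ∑ i ∈ s, p i * (x i / √(x i + t)) ≤ (∑ i ∈ s, p i * x i) / √(∑ i ∈ s, p i * x i + t) := by
  have hmean : 0 ≤ ∑ i ∈ s, p i * x i := sum_nonneg fun i hi => mul_nonneg (hp i hi) (hx i hi)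
  exact sum_mul_le_of_le_tangent s p x (fun y => y / √(y + t)) _ hp hsum fun i hi =>
    div_sqrt_add_le_tangent (by linarith [hx i hi]) (by linarith) ht.le

theorem mse_gauss_le_mse_gmm {K : ℕ} (p σsq : Fin K → ℝ)
    (hp : ∀ k, 0 ≤ p k) (hsum : ∑ k, p k = 1) (hσ : ∀ k, 0 < σsq k)
    (t : ℝ) (ht : 0 < t) :
    (∑ k, p k * σsq k) - (2/π) * ((∑ k, p k * σsq k)^2 / ((∑ k, p k * σsq k) + t))
      ≤ (∑ k, p k * σsq k) - (2/π) * (∑ k, p k * (σsq k / Real.sqrt (σsq k + t)))^2 := by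
  set S := ∑ k, p k * σsq k
  have hS : 0 ≤ S := sum_nonneg fun k _ => mul_nonneg (hp k) (hσ k).le
  have hjensen : ∑ k, p k * (σsq k / √(σsq k + t)) ≤ S / √(S + t) :=
    sum_mul_div_sqrt_add_le univ p σsq (fun k _ => hp k) hsum (fun k _ => (hσ k).le) ht
  have hmix : 0 ≤ ∑ k, p k * (σsq k / √(σsq k + t)) :=
    sum_nonneg fun k _ => mul_nonneg (hp k) (div_nonneg (hσ k).le (sqrt_nonneg _))
  have hsq : (∑ k, p k * (σsq k / √(σsq k + t))) ^ 2 ≤ S ^ 2 / (S + t) := by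
    calc _ ≤ (S / √(S + t)) ^ 2 := pow_le_pow_left₀ hmix hjensen 2
      _ = S ^ 2 / (S + t) := by rw [div_pow, sq_sqrt (by linarith)]
  gcongr
end

section
/- The sequence g(M) = (4M²/π) sin²(π/(4M)) is strictly increasing in M for M ≥ 1, and g(M) < π/4 for all positive integers M; consequently the MSE σ_glob² − g(M) σ̄² is strictly decreasing in M and bounded below by σ_glob² − (π/4) σ̄². -/
/-
With x_M = π/(4M) one has g(M) = (π/4)·sinc(x_M)², and x_M decreases in M inside (0, π/4].
Since sin is strictly concave on [0, π] and vanishes at 0, its secant slope sinc x = sin x / x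
strictly decreases on (0, π]; hence g increases, and sin x < x gives sinc < 1, so g < π/4.
The MSE statements follow because σ̄ > 0.
-/

open Real Finset

noncomputable def gainFactor (M : ℕ) : ℝ :=
  (4 * (M:ℝ)^2 / π) * Real.sin (π / (4*(M:ℝ)))^2

namespace Real

lemma sinc_strictAntiOn : StrictAntiOn sinc (Set.Ioc 0 π) := by
  intro x hx y hy hxy
  rw [sinc_of_ne_zero hx.1.ne', sinc_of_ne_zero hy.1.ne']
  simpa using strictConcaveOn_sin_Icc.secant_strict_mono (a := 0) ⟨le_rfl, pi_pos.le⟩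
    (Set.Ioc_subset_Icc_self hx) (Set.Ioc_subset_Icc_self hy) hx.1.ne' hy.1.ne' hxy

lemma sinc_lt_one {x : ℝ} (hx : 0 < x) : sinc x < 1 := by
  rw [sinc_of_ne_zero hx.ne', div_lt_one hx]
  exact sin_lt hx

lemma sinc_nonneg {x : ℝ} (hx₀ : 0 < x) (hxπ : x ≤ π) : 0 ≤ sinc x := by
  rw [sinc_of_ne_zero hx₀.ne']
  exact div_nonneg (sin_nonneg_of_nonneg_of_le_pi hx₀.le hxπ) hx₀.le

end Real

lemma gainFactor_eq_sinc {M : ℕ} (hM : M ≠ 0) :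
    gainFactor M = π / 4 * sinc (π / (4 * M)) ^ 2 := by
  have hM : (M : ℝ) ≠ 0 := by exact_mod_cast hM
  rw [gainFactor, sinc_of_ne_zero (by positivity)]
  field_simp

lemma pi_div_four_mul_natCast_mem_Ioc {M : ℕ} (hM : 1 ≤ M) : π / (4 * M) ∈ Set.Ioc 0 π := by
  have hM : (1 : ℝ) ≤ M := by exact_mod_cast hM
  exact ⟨by positivity, div_le_self pi_pos.le (by linarith)⟩

lemma gainFactor_strictMonoOn : StrictMonoOn gainFactor (Set.Ici 1) := by
  intro M hM N hN hMN
  rw [Set.mem_Ici] at hM hN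
  have hMN' : (M : ℝ) < N := by exact_mod_cast hMN
  have hxN := pi_div_four_mul_natCast_mem_Ioc hN
  have hxM := pi_div_four_mul_natCast_mem_Ioc hM
  have hsinc : sinc (π / (4 * M)) < sinc (π / (4 * N)) :=
    sinc_strictAntiOn hxN hxM (by gcongr)
  rw [gainFactor_eq_sinc (by omega : M ≠ 0), gainFactor_eq_sinc (by omega : N ≠ 0)]
  gcongr
  exact sinc_nonneg hxM.1 hxM.2

lemma gainFactor_lt_pi_div_four {M : ℕ} (hM : 1 ≤ M) : gainFactor M < π / 4 := by
  have hx := pi_div_four_mul_natCast_mem_Ioc hM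
  have hsq : sinc (π / (4 * M)) ^ 2 < 1 :=
    pow_lt_one₀ (sinc_nonneg hx.1 hx.2) (sinc_lt_one hx.1) two_ne_zero
  rw [gainFactor_eq_sinc (by omega)]
  nlinarith [pi_pos]

lemma sum_mul_pos_of_sum_eq_one {ι : Type*} [Fintype ι] {p σ : ι → ℝ} (hp : ∀ i, 0 ≤ p i)
    (hsum : ∑ i, p i = 1) (hσ : ∀ i, 0 < σ i) : 0 < ∑ i, p i * σ i := by
  obtain ⟨i, -, hi⟩ := exists_ne_zero_of_sum_ne_zero (hsum ▸ one_ne_zero : ∑ i, p i ≠ 0)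
  exact sum_pos' (fun j _ => mul_nonneg (hp j) (hσ j).le)
    ⟨i, mem_univ i, mul_pos ((hp i).lt_of_ne' hi) (hσ i)⟩

theorem gain_increasing_mse_decreasing {K : ℕ} (p σ : Fin K → ℝ)
    (hp : ∀ k, 0 ≤ p k) (hsum : ∑ k, p k = 1) (hσ : ∀ k, 0 < σ k) :
    (∀ M : ℕ, 1 ≤ M → gainFactor M < gainFactor (M+1)) ∧
    (∀ M : ℕ, 1 ≤ M → gainFactor M < π/4) ∧
    (∀ M : ℕ, 1 ≤ M →
      (∑ k, p k * σ k^2) - gainFactor (M+1) * (∑ k, p k * σ k)^2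
        < (∑ k, p k * σ k^2) - gainFactor M * (∑ k, p k * σ k)^2) ∧
    (∀ M : ℕ, 1 ≤ M →
      (∑ k, p k * σ k^2) - (π/4) * (∑ k, p k * σ k)^2
        ≤ (∑ k, p k * σ k^2) - gainFactor M * (∑ k, p k * σ k)^2) := by
  have increasing (M : ℕ) (hM : 1 ≤ M) : gainFactor M < gainFactor (M + 1) :=
    gainFactor_strictMonoOn (Set.mem_Ici.2 hM) (Set.mem_Ici.2 (by omega)) M.lt_succ_self
  have hσbar : 0 < ∑ k, p k * σ k := sum_mul_pos_of_sum_eq_one hp hsum hσ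
  refine ⟨increasing, fun M => gainFactor_lt_pi_div_four, fun M hM => ?_, fun M hM => ?_⟩
  · gcongr
    exact increasing M hM
  · gcongr
    exact (gainFactor_lt_pi_div_four hM).le
end

section
/- For all η² > 0, 0 < MSE_GMM(η²) ≤ σ_glob², where MSE_GMM(η²) = σ_glob² − (2/π)(∑_k p_k σ_k²/sqrt(σ_k² + η²))². In particular ∑_k p_k σ_k²/sqrt(σ_k² + η²) < sqrt(π/2) · σ_glob. -/
/-!
With `xₖ = σₖ² / √(σₖ² + η²)`, Jensen's inequality for the square gives
`(∑ pₖ xₖ)² ≤ ∑ pₖ xₖ²`, and `xₖ² = σₖ⁴ / (σₖ² + η²) ≤ σₖ²`; hence `(∑ pₖ xₖ)² ≤ σ_glob²`.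
Since `2/π < 1` and `σ_glob² > 0`, the subtracted term is strictly smaller than `σ_glob²`.
-/

open Real Finset

lemma sq_sum_mul_le_sum_mul_sq {𝕜 ι : Type*} [Field 𝕜] [LinearOrder 𝕜] [IsStrictOrderedRing 𝕜]
    {s : Finset ι} {w x : ι → 𝕜} (hw : ∀ i ∈ s, 0 ≤ w i) (hw₁ : ∑ i ∈ s, w i = 1) :
    (∑ i ∈ s, w i * x i) ^ 2 ≤ ∑ i ∈ s, w i * x i ^ 2 :=
  (even_two.convexOn_pow (𝕜 := 𝕜)).map_sum_le hw hw₁ fun _ _ ↦ Set.mem_univ _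

lemma sum_mul_pos_of_sum_eq_one_s11 {ι : Type*} {s : Finset ι} {w a : ι → ℝ}
    (hw : ∀ i ∈ s, 0 ≤ w i) (hw₁ : ∑ i ∈ s, w i = 1) (ha : ∀ i ∈ s, 0 < a i) :
    0 < ∑ i ∈ s, w i * a i := by
  obtain ⟨i, hi, hwi⟩ := exists_ne_zero_of_sum_ne_zero (hw₁ ▸ one_ne_zero)
  exact sum_pos' (fun j hj ↦ mul_nonneg (hw j hj) (ha j hj).le)
    ⟨i, hi, mul_pos ((hw i hi).lt_of_ne' hwi) (ha i hi)⟩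

lemma sq_div_sqrt_add_le {a t : ℝ} (ha : 0 ≤ a) (ht : 0 ≤ t) : (a / √(a + t)) ^ 2 ≤ a := by
  rw [div_pow, sq_sqrt (by positivity)]
  exact div_le_of_le_mul₀ (by positivity) ha (by nlinarith)

lemma two_div_pi_mul_lt {A S : ℝ} (hAS : A ^ 2 ≤ S) (hS : 0 < S) : 2 / π * A ^ 2 < S :=
  calc 2 / π * A ^ 2 ≤ 2 / π * S := by gcongr
    _ < 1 * S := by
      gcongr
      rw [div_lt_one pi_pos]
      linarith [pi_gt_three]
    _ = S := one_mul S

theorem mse_gmm_bounds {K : ℕ} (p σsq : Fin K → ℝ)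
    (hp : ∀ k, 0 ≤ p k) (hsum : ∑ k, p k = 1) (hσ : ∀ k, 0 < σsq k)
    (t : ℝ) (ht : 0 < t) :
    (0 < (∑ k, p k * σsq k)
        - (2/π) * (∑ k, p k * (σsq k / Real.sqrt (σsq k + t)))^2 ∧
      (∑ k, p k * σsq k)
        - (2/π) * (∑ k, p k * (σsq k / Real.sqrt (σsq k + t)))^2
        ≤ ∑ k, p k * σsq k) ∧
    ∑ k, p k * (σsq k / Real.sqrt (σsq k + t))
      < Real.sqrt (π/2) * Real.sqrt (∑ k, p k * σsq k) := by
  set A := ∑ k, p k * (σsq k / √(σsq k + t))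
  set S := ∑ k, p k * σsq k
  have hAS : A ^ 2 ≤ S :=
    (sq_sum_mul_le_sum_mul_sq (fun k _ ↦ hp k) hsum).trans <| sum_le_sum fun k _ ↦
      mul_le_mul_of_nonneg_left (sq_div_sqrt_add_le (hσ k).le ht.le) (hp k)
  have hlt : 2 / π * A ^ 2 < S :=
    two_div_pi_mul_lt hAS (sum_mul_pos_of_sum_eq_one_s11 (fun k _ ↦ hp k) hsum fun k _ ↦ hσ k)
  refine ⟨⟨sub_pos.2 hlt, sub_le_self _ (by positivity)⟩, ?_⟩
  rw [← sqrt_mul (by positivity)]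
  refine lt_sqrt_of_sq_lt ?_
  calc A ^ 2 = π / 2 * (2 / π * A ^ 2) := by field_simp
    _ < π / 2 * S := by gcongr
end

section
/- Let h ~ ∑_k p_k N(0, σ_k²) (zero-mean scalar real Gaussian mixture), n ~ N(0, η²) independent of h, and r = sign(h + n). Then E[h | r] = sqrt(2/π) (∑_k p_k σ_k²/sqrt(σ_k² + η²)) · r almost surely; in particular the conditional mean estimator is linear in r. -/
/-!
Given its mixture component, `h` is `N(0, σ_k²)`, and for independent centred Gaussians
`E[h; h + n > 0] = σ_k² φ_{σ_k² + η²}(0)`: integrating out `h` over `h > -n` produces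
`σ_k² φ_{σ_k²}(n)`, and the product of two centred Gaussian densities integrates to the density
of the sum of the variances at `0`. The law of `(h, n)` is invariant under `(h, n) ↦ (-h, -n)`
and `{h + n = 0}` is null, so `sign (h + n)` has two atoms of probability `1/2` on which `h`
has means `±2 E[h; h + n > 0]`.
-/

open Real Finset MeasureTheory ProbabilityTheory

/-- Law of a zero-mean scalar Gaussian mixture with weights `p` and standard deviations `σ`. -/
noncomputable def gmLaw {K : ℕ} (p σ : Fin K → ℝ) : Measure ℝ :=
  ∑ k, ENNReal.ofReal (p k) • gaussianReal 0 ⟨σ k^2, sq_nonneg (σ k)⟩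

open Filter Topology
open scoped NNReal ENNReal

lemma integral_Ioi_mul_exp_neg_mul_sq {b : ℝ} (hb : 0 < b) (a : ℝ) :
    ∫ x in Set.Ioi a, x * exp (-b * x ^ 2) = exp (-b * a ^ 2) / (2 * b) := by
  have hderiv : ∀ x ∈ Set.Ici a,
      HasDerivAt (fun x => exp (-b * x ^ 2) * (-(2 * b)⁻¹)) (x * exp (-b * x ^ 2)) x := by
    intro x _
    refine (((hasDerivAt_pow 2 x).const_mul (-b)).exp.mul_const (-(2 * b)⁻¹)).congr_deriv ?_
    field_simp
    ring
  have hlim : Tendsto (fun x => exp (-b * x ^ 2) * (-(2 * b)⁻¹)) atTop (𝓝 0) := by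
    simpa using (tendsto_exp_atBot.comp <| (tendsto_pow_atTop two_ne_zero).const_mul_atTop_of_neg
      (neg_neg_of_pos hb)).mul_const (-(2 * b)⁻¹)
  rw [integral_Ioi_of_hasDerivAt_of_tendsto' hderiv (integrable_mul_exp_neg_mul_sq hb).integrableOn
    hlim]
  ring

lemma gaussianPDFReal_zero_eq_mul_exp (v : ℝ≥0) (x : ℝ) :
    gaussianPDFReal 0 v x = (√(2 * π * v))⁻¹ * exp (-(2 * (v : ℝ))⁻¹ * x ^ 2) := by
  simp only [gaussianPDFReal_def, sub_zero]
  ring_nf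

lemma setIntegral_Ioi_neg_gaussianReal {v : ℝ≥0} (hv : v ≠ 0) (y : ℝ) :
    ∫ x in Set.Ioi (-y), x ∂gaussianReal 0 v = v * gaussianPDFReal 0 v y := by
  have hv' : (0 : ℝ) < v := by positivity
  have hpdf : ∀ x, gaussianPDFReal 0 v x * x
      = (√(2 * π * v))⁻¹ * (x * exp (-(2 * (v : ℝ))⁻¹ * x ^ 2)) := fun x => by
    rw [gaussianPDFReal_zero_eq_mul_exp]; ring
  rw [← integral_indicator measurableSet_Ioi, integral_gaussianReal_eq_integral_smul hv]
  simp_rw [← Set.indicator_smul_apply, smul_eq_mul, hpdf]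
  rw [integral_indicator measurableSet_Ioi, integral_const_mul,
    integral_Ioi_mul_exp_neg_mul_sq (by positivity), gaussianPDFReal_zero_eq_mul_exp]
  field_simp

lemma integral_gaussianPDFReal_mul_gaussianPDFReal {v w : ℝ≥0} (hv : v ≠ 0) (hw : w ≠ 0) :
    ∫ y, gaussianPDFReal 0 v y * gaussianPDFReal 0 w y = gaussianPDFReal 0 (v + w) 0 := by
  have hv' : (0 : ℝ) < v := by positivity
  have hw' : (0 : ℝ) < w := by positivity
  have hprod : ∀ y, gaussianPDFReal 0 v y * gaussianPDFReal 0 w y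
      = (√(2 * π * v))⁻¹ * (√(2 * π * w))⁻¹ * exp (-((v + w) / (2 * v * w)) * y ^ 2) := by
    intro y
    rw [gaussianPDFReal_zero_eq_mul_exp, gaussianPDFReal_zero_eq_mul_exp, mul_mul_mul_comm,
      ← exp_add]
    congr 2
    field_simp
    ring
  simp_rw [hprod]
  rw [integral_const_mul, integral_gaussian, gaussianPDFReal_zero_eq_mul_exp]
  simp only [NNReal.coe_add, ne_eq, OfNat.ofNat_ne_zero, not_false_eq_true, zero_pow, mul_zero,
    exp_zero, mul_one]
  rw [← sqrt_inv, ← sqrt_inv, ← sqrt_inv, ← sqrt_mul (by positivity),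
    ← sqrt_mul (by positivity)]
  congr 1
  field_simp

lemma setIntegral_fst_add_snd_pos_gaussianReal_prod {v w : ℝ≥0} (hv : v ≠ 0) (hw : w ≠ 0) :
    ∫ z in {z : ℝ × ℝ | 0 < z.1 + z.2}, z.1 ∂(gaussianReal 0 v).prod (gaussianReal 0 w)
      = v * gaussianPDFReal 0 (v + w) 0 := by
  have hA : MeasurableSet {z : ℝ × ℝ | 0 < z.1 + z.2} :=
    measurableSet_lt measurable_const (by fun_prop)
  have hint : Integrable (fun z : ℝ × ℝ => z.1) ((gaussianReal 0 v).prod (gaussianReal 0 w)) :=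
    ((memLp_id_gaussianReal 1).integrable le_rfl).comp_fst _
  rw [← integral_indicator hA, integral_prod_symm _ (hint.indicator hA)]
  have hslice : ∀ y,
      ∫ x, {z : ℝ × ℝ | 0 < z.1 + z.2}.indicator (·.1) (x, y) ∂gaussianReal 0 v
        = v * gaussianPDFReal 0 v y := by
    intro y
    rw [← setIntegral_Ioi_neg_gaussianReal hv y, ← integral_indicator measurableSet_Ioi]
    congr with x
    simp [Set.indicator_apply, neg_lt_iff_pos_add]
  simp_rw [hslice]
  rw [integral_gaussianReal_eq_integral_smul hw]
  simp_rw [smul_eq_mul, mul_left_comm _ (v : ℝ)]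
  rw [integral_const_mul, integral_gaussianPDFReal_mul_gaussianPDFReal hw hv, add_comm]

lemma two_mul_gaussianPDFReal_zero_zero (u : ℝ≥0) :
    2 * gaussianPDFReal 0 u 0 = √(2 / π) / √u := by
  simp only [gaussianPDFReal_zero_eq_mul_exp, ne_eq, OfNat.ofNat_ne_zero, not_false_eq_true,
    zero_pow, mul_zero, exp_zero, mul_one]
  rw [← sqrt_div' _ u.coe_nonneg, ← sqrt_inv,
    show 2 / π / (u : ℝ) = 2 ^ 2 * (2 * π * u)⁻¹ by ring, sqrt_mul (by norm_num),
    sqrt_sq (by norm_num)]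

lemma Real.measurable_sign : Measurable Real.sign :=
  Measurable.ite measurableSet_Iio measurable_const
    (Measurable.ite measurableSet_Ioi measurable_const measurable_const)

section SignConditioning

variable {Ω : Type*} [MeasurableSpace Ω] {μ : Measure Ω} {Y X : Ω → ℝ}

open scoped Classical in
lemma setIntegral_preimage_sign (hY : Measurable Y) (hY0 : μ {ω | Y ω = 0} = 0) {f : Ω → ℝ}
    (hf : Integrable f μ) {B : Set ℝ} (hB : MeasurableSet B) :
    ∫ ω in (fun ω => Real.sign (Y ω)) ⁻¹' B, f ω ∂μ =
      (if (1 : ℝ) ∈ B then ∫ ω in {ω | 0 < Y ω}, f ω ∂μ else 0) +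
      (if (-1 : ℝ) ∈ B then ∫ ω in {ω | Y ω < 0}, f ω ∂μ else 0) := by
  set s := (fun ω => Real.sign (Y ω)) ⁻¹' B
  have hpos : s ∩ {ω | 0 < Y ω} = if (1 : ℝ) ∈ B then {ω | 0 < Y ω} else ∅ := by
    ext ω
    by_cases hω : 0 < Y ω <;> split_ifs <;> simp [s, Real.sign_of_pos, *]
  have hneg : s ∩ {ω | Y ω < 0} = if (-1 : ℝ) ∈ B then {ω | Y ω < 0} else ∅ := by
    ext ω
    by_cases hω : Y ω < 0 <;> split_ifs <;> simp [s, Real.sign_of_neg, *]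
  have hdisj : Disjoint {ω | 0 < Y ω} {ω | Y ω < 0} :=
    Set.disjoint_left.2 fun ω (h₁ : 0 < Y ω) h₂ => lt_asymm h₁ h₂
  have hs : s =ᵐ[μ] (s ∩ {ω | 0 < Y ω} ∪ s ∩ {ω | Y ω < 0} : Set Ω) := by
    refine ae_eq_set.2 ⟨measure_mono_null ?_ hY0, ?_⟩
    · rintro ω ⟨hωs, hω⟩
      simp only [Set.mem_union, Set.mem_inter_iff, Set.mem_ofPred_eq, hωs, true_and, not_or,
        not_lt] at hω
      exact le_antisymm hω.1 hω.2
    · rw [Set.sdiff_eq_empty.2 (Set.union_subset Set.inter_subset_left Set.inter_subset_left),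
        measure_empty]
  rw [setIntegral_congr_set hs, setIntegral_union ?_ ?_ hf.integrableOn hf.integrableOn, hpos, hneg]
  · split_ifs <;> simp
  · exact hdisj.mono Set.inter_subset_right Set.inter_subset_right
  · exact (Real.measurable_sign.comp hY hB).inter (measurableSet_lt hY measurable_const)

theorem condExp_comap_sign_ae_eq [IsFiniteMeasure μ] (hY : Measurable Y)
    (hY0 : μ {ω | Y ω = 0} = 0) (hX : Integrable X μ) {c : ℝ}
    (hpos : ∫ ω in {ω | 0 < Y ω}, X ω ∂μ = c * μ.real {ω | 0 < Y ω})
    (hneg : ∫ ω in {ω | Y ω < 0}, X ω ∂μ = -c * μ.real {ω | Y ω < 0}) :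
    μ[X | MeasurableSpace.comap (fun ω => Real.sign (Y ω)) inferInstance]
      =ᵐ[μ] fun ω => c * Real.sign (Y ω) := by
  have hq : Measurable fun ω => Real.sign (Y ω) := Real.measurable_sign.comp hY
  have hg_meas :
      StronglyMeasurable[MeasurableSpace.comap (fun ω => Real.sign (Y ω)) inferInstance]
        fun ω => c * Real.sign (Y ω) :=
    ((measurable_const.mul measurable_id).comp (comap_measurable _)).stronglyMeasurable
  have hg : Integrable (fun ω => c * Real.sign (Y ω)) μ :=
    (Integrable.of_bound hq.aestronglyMeasurable 1 (ae_of_all _ fun ω => by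
      rcases Real.sign_apply_eq (Y ω) with h | h | h <;> simp [h])).const_mul c
  refine (ae_eq_condExp_of_forall_setIntegral_eq hq.comap_le hX (fun _ _ _ => hg.integrableOn) ?_
    hg_meas.aestronglyMeasurable).symm
  rintro _ ⟨B, hB, rfl⟩ -
  rw [setIntegral_preimage_sign hY hY0 hg hB, setIntegral_preimage_sign hY hY0 hX hB, hpos, hneg,
    setIntegral_congr_fun (measurableSet_lt measurable_const hY)
      (fun ω (hω : 0 < Y ω) => by rw [Real.sign_of_pos hω, mul_one]),
    setIntegral_congr_fun (measurableSet_lt hY measurable_const)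
      (fun ω (hω : Y ω < 0) => by rw [Real.sign_of_neg hω]),
    setIntegral_const, setIntegral_const, smul_eq_mul, smul_eq_mul, mul_comm, mul_neg_one,
    mul_comm (μ.real _), neg_mul]

theorem condExp_comap_sign_ae_eq_of_measurePreserving [IsProbabilityMeasure μ] {e : Ω → Ω}
    (he : MeasurePreserving e μ μ) (hY : Measurable Y) (hYe : ∀ ω, Y (e ω) = -Y ω)
    (hY0 : μ {ω | Y ω = 0} = 0) (hX : Integrable X μ) (hXe : ∀ ω, X (e ω) = -X ω) :
    μ[X | MeasurableSpace.comap (fun ω => Real.sign (Y ω)) inferInstance]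
      =ᵐ[μ] fun ω => (2 * ∫ ω in {ω | 0 < Y ω}, X ω ∂μ) * Real.sign (Y ω) := by
  have hApos : MeasurableSet {ω | 0 < Y ω} := measurableSet_lt measurable_const hY
  have hAneg : MeasurableSet {ω | Y ω < 0} := measurableSet_lt hY measurable_const
  have hpre : e ⁻¹' {ω | 0 < Y ω} = {ω | Y ω < 0} := by
    ext ω
    simp [hYe]
  have hreal : μ.real {ω | Y ω < 0} = μ.real {ω | 0 < Y ω} := by
    rw [← hpre, he.measureReal_preimage hApos.nullMeasurableSet]
  have hhalf : μ.real {ω | 0 < Y ω} = 1 / 2 := by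
    have hunion : {ω | 0 < Y ω} ∪ {ω | Y ω < 0} = {ω | Y ω = 0}ᶜ := by
      ext ω
      simp [lt_or_lt_iff_ne, ne_comm]
    have hone : μ.real ({ω | 0 < Y ω} ∪ {ω | Y ω < 0}) = 1 := by
      rw [hunion, measureReal_def,
        (prob_compl_eq_one_iff (measurableSet_eq_fun hY measurable_const)).2 hY0,
        ENNReal.toReal_one]
    have hdisj : Disjoint {ω | 0 < Y ω} {ω | Y ω < 0} :=
      Set.disjoint_left.2 fun ω (h₁ : 0 < Y ω) h₂ => lt_asymm h₁ h₂
    rw [measureReal_union hdisj hAneg, hreal] at hone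
    linarith
  have hodd : ∫ ω in {ω | 0 < Y ω}, X ω ∂μ = -∫ ω in {ω | Y ω < 0}, X ω ∂μ := by
    calc ∫ ω in {ω | 0 < Y ω}, X ω ∂μ
        = ∫ ω in {ω | 0 < Y ω}, X ω ∂μ.map e := by rw [he.map_eq]
      _ = ∫ ω in e ⁻¹' {ω | 0 < Y ω}, X (e ω) ∂μ :=
        setIntegral_map hApos (by rw [he.map_eq]; exact hX.aestronglyMeasurable) he.aemeasurable
      _ = -∫ ω in {ω | Y ω < 0}, X ω ∂μ := by simp_rw [hXe, hpre, integral_neg]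
  refine condExp_comap_sign_ae_eq hY hY0 hX ?_ ?_
  · rw [hhalf]; ring
  · rw [hodd, hreal, hhalf]; ring

end SignConditioning

lemma measurePreserving_neg_gaussianReal (v : ℝ≥0) :
    MeasurePreserving (fun x : ℝ => -x) (gaussianReal 0 v) (gaussianReal 0 v) :=
  ⟨measurable_neg, by rw [gaussianReal_map_neg, neg_zero]⟩

lemma measure_prod_setOf_add_eq_zero (μ ν : Measure ℝ) [SFinite ν] [NullSingletonClass ν] :
    (μ.prod ν) {z : ℝ × ℝ | z.1 + z.2 = 0} = 0 := by
  rw [Measure.prod_apply (measurableSet_eq_fun (by fun_prop) measurable_const)]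
  have hslice : ∀ x : ℝ, Prod.mk x ⁻¹' {z : ℝ × ℝ | z.1 + z.2 = 0} = {-x} := by
    intro x
    ext y
    simp [eq_neg_iff_add_eq_zero, add_comm]
  simp [hslice]

section Mixture

variable {ι α : Type*} [Fintype ι] [MeasurableSpace α] {p : ι → ℝ} {μ : ι → Measure α}

lemma isProbabilityMeasure_sum_ofReal_smul [∀ i, IsProbabilityMeasure (μ i)]
    (hp : ∀ i, 0 ≤ p i) (hsum : ∑ i, p i = 1) :
    IsProbabilityMeasure (∑ i, ENNReal.ofReal (p i) • μ i) := by
  constructor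
  simp only [Measure.coe_finsetSum, Finset.sum_apply, Measure.smul_apply, measure_univ,
    smul_eq_mul, mul_one]
  rw [← ENNReal.ofReal_sum_of_nonneg fun i _ => hp i, hsum, ENNReal.ofReal_one]

lemma measurePreserving_sum_smul (c : ι → ℝ≥0∞) {e : α → α} (hmeas : Measurable e)
    (he : ∀ i, (μ i).map e = μ i) :
    MeasurePreserving e (∑ i, c i • μ i) (∑ i, c i • μ i) := by
  refine ⟨hmeas, ?_⟩
  rw [Measure.map_finset_sum' hmeas.aemeasurable]
  simp_rw [Measure.map_smul, he]

lemma sum_smul_prod (c : ι → ℝ≥0∞) {β : Type*} [MeasurableSpace β] (ν : Measure β)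
    [SFinite ν] :
    (∑ i, c i • μ i).prod ν = ∑ i, c i • (μ i).prod ν := by
  rw [← Measure.sum_fintype, Measure.prod_sum_left, Measure.sum_fintype]
  simp_rw [Measure.prod_smul_left]

lemma integral_sum_ofReal_smul (hp : ∀ i, 0 ≤ p i) {f : α → ℝ}
    (hf : ∀ i, Integrable f (μ i)) :
    ∫ x, f x ∂(∑ i, ENNReal.ofReal (p i) • μ i) = ∑ i, p i * ∫ x, f x ∂μ i := by
  rw [integral_finsetSum_measure fun i _ => (hf i).smul_measure ENNReal.ofReal_ne_top]
  simp_rw [integral_smul_measure, ENNReal.toReal_ofReal (hp _), smul_eq_mul]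

end Mixture

section GaussianMixture

variable {K : ℕ}

lemma isProbabilityMeasure_gmLaw {p : Fin K → ℝ} (σ : Fin K → ℝ) (hp : ∀ k, 0 ≤ p k)
    (hsum : ∑ k, p k = 1) : IsProbabilityMeasure (gmLaw p σ) :=
  let v : Fin K → ℝ≥0 := fun k => ⟨σ k ^ 2, sq_nonneg (σ k)⟩
  isProbabilityMeasure_sum_ofReal_smul (μ := fun k => gaussianReal 0 (v k)) hp hsum

lemma measurePreserving_neg_gmLaw (p σ : Fin K → ℝ) :
    MeasurePreserving (fun x : ℝ => -x) (gmLaw p σ) (gmLaw p σ) :=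
  measurePreserving_sum_smul _ measurable_neg fun _ => (measurePreserving_neg_gaussianReal _).map_eq

lemma integrable_id_gmLaw (p σ : Fin K → ℝ) : Integrable id (gmLaw p σ) :=
  integrable_finsetSum_measure.2 fun _ _ =>
    ((memLp_id_gaussianReal 1).integrable le_rfl).smul_measure ENNReal.ofReal_ne_top

lemma two_mul_setIntegral_fst_add_snd_pos_gmLaw_prod {p σ : Fin K → ℝ} (hp : ∀ k, 0 ≤ p k)
    (hσ : ∀ k, 0 < σ k) {η : ℝ} (hη : 0 < η) :
    2 * ∫ z in {z : ℝ × ℝ | 0 < z.1 + z.2}, z.1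
        ∂(gmLaw p σ).prod (gaussianReal 0 ⟨η ^ 2, sq_nonneg η⟩)
      = √(2 / π) * ∑ k, p k * (σ k ^ 2 / √(σ k ^ 2 + η ^ 2)) := by
  set v : Fin K → ℝ≥0 := fun k => ⟨σ k ^ 2, sq_nonneg (σ k)⟩
  set w : ℝ≥0 := ⟨η ^ 2, sq_nonneg η⟩
  have hv : ∀ k, v k ≠ 0 := fun k => (NNReal.coe_pos (r := v k)).1 (pow_pos (hσ k) 2) |>.ne'
  have hw : w ≠ 0 := (NNReal.coe_pos (r := w)).1 (pow_pos hη 2) |>.ne'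
  have hlaw : gmLaw p σ = ∑ k, ENNReal.ofReal (p k) • gaussianReal 0 (v k) := rfl
  have hA : MeasurableSet {z : ℝ × ℝ | 0 < z.1 + z.2} :=
    measurableSet_lt measurable_const (by fun_prop)
  have hX : ∀ k,
      Integrable (fun z : ℝ × ℝ => z.1) ((gaussianReal 0 (v k)).prod (gaussianReal 0 w)) :=
    fun k => ((memLp_id_gaussianReal 1).integrable le_rfl).comp_fst _
  rw [← integral_indicator hA, hlaw, sum_smul_prod,
    integral_sum_ofReal_smul hp fun k => (hX k).indicator hA, mul_sum, mul_sum]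
  refine Finset.sum_congr rfl fun k _ => ?_
  rw [integral_indicator hA, setIntegral_fst_add_snd_pos_gaussianReal_prod (hv k) hw]
  have h : 2 * gaussianPDFReal 0 (v k + w) 0 = √(2 / π) / √(σ k ^ 2 + η ^ 2) :=
    two_mul_gaussianPDFReal_zero_zero (v k + w)
  change 2 * (p k * (σ k ^ 2 * _)) = _
  linear_combination (p k * σ k ^ 2) * h

end GaussianMixture

theorem cme_one_bit_gmm_linear {K : ℕ} (p σ : Fin K → ℝ)
    (hp : ∀ k, 0 ≤ p k) (hsum : ∑ k, p k = 1) (hσ : ∀ k, 0 < σ k)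
    (η : ℝ) (hη : 0 < η) :
    MeasureTheory.condExp
        (MeasurableSpace.comap (fun z : ℝ × ℝ => Real.sign (z.1 + z.2)) inferInstance)
        ((gmLaw p σ).prod (gaussianReal 0 ⟨η^2, sq_nonneg η⟩))
        (fun z : ℝ × ℝ => z.1)
      =ᵐ[(gmLaw p σ).prod (gaussianReal 0 ⟨η^2, sq_nonneg η⟩)]
    fun z : ℝ × ℝ =>
      Real.sqrt (2/π) * (∑ k, p k * (σ k^2 / Real.sqrt (σ k^2 + η^2)))
        * Real.sign (z.1 + z.2) := by
  have hc := two_mul_setIntegral_fst_add_snd_pos_gmLaw_prod hp hσ hη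
  -- instance search fails on the anonymous constructor `⟨η ^ 2, _⟩`, but not on a name for it
  set w : ℝ≥0 := ⟨η ^ 2, sq_nonneg η⟩
  have := isProbabilityMeasure_gmLaw σ hp hsum
  have hw : w ≠ 0 := ((NNReal.coe_pos (r := w)).1 (pow_pos hη 2)).ne'
  have := nullSingletonClass_gaussianReal (μ := 0) hw
  rw [← hc]
  exact condExp_comap_sign_ae_eq_of_measurePreserving
    ((measurePreserving_neg_gmLaw p σ).prod (measurePreserving_neg_gaussianReal w))
    (by fun_prop) (fun z => by simp; ring) (measure_prod_setOf_add_eq_zero _ _)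
    ((integrable_id_gmLaw p σ).comp_fst _) (fun _ => rfl)
end
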